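/- The non-factorial Grothendieck polynomial admits the Schur expansion G_λ(x) = Σ_α β^{|α|} ∏_{i=1}^{n-1} C(i, α_i) · s_{λ+α}(x), where the sum runs over all compositions α = (0, α₁, …, α_{n-1}) with 0 ≤ α_i ≤ i, |α| = Σα_i, and s_{λ+α}(x) := det(x_j^{n+(λ+α)_i - i})/det(x_j^{n-i}) is the generalized Schur function indexed by the composition λ+α. -/
import Mathlib


open Finset

/-- The Grothendieck polynomial `G_λ(x)` defined by the determinant quotient
`det[x_j^{λ_i+n-i}(1+βx_j)^{i-1}] / det[x_j^{n-i}]`. -/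
noncomputable def grothDet8 {K : Type*} [Field K] {n : ℕ} (β : K) (x : Fin n → K)
    (lam : Fin n → ℕ) : K :=
  Matrix.det (Matrix.of fun i j : Fin n =>
      x j ^ (lam i + (n - 1 - i.val)) * (1 + β * x j) ^ i.val)
    / Matrix.det (Matrix.of fun i j : Fin n => x j ^ (n - 1 - i.val))

/-- The generalized Schur function `s_μ(x) = det[x_j^{n+μ_i-i}] / det[x_j^{n-i}]`
for a composition `μ : Fin n → ℕ`. -/
noncomputable def schurComp8 {K : Type*} [Field K] {n : ℕ} (x : Fin n → K)
    (μ : Fin n → ℕ) : K :=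
  Matrix.det (Matrix.of fun i j : Fin n => x j ^ (μ i + (n - 1 - i.val)))
    / Matrix.det (Matrix.of fun i j : Fin n => x j ^ (n - 1 - i.val))

/-- Schur expansion of the non-factorial Grothendieck polynomial:
`G_λ(x) = Σ_α β^{|α|} ∏_i C(i, α_i) s_{λ+α}(x)`, where the sum runs over all
compositions `α = (α_0,…,α_{n-1})` with `0 ≤ α_i ≤ i` (so `α_0 = 0`). -/
theorem grothendieck_schur_expansion {K : Type*} [Field K] (n : ℕ) (β : K)
    (x : Fin n → K) (lam : Fin n → ℕ) (hlam : Antitone lam)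
    (hx : ∀ i j, i ≠ j → x i ≠ x j) :
    grothDet8 β x lam
      = ∑ α : (i : Fin n) → Fin (i.val + 1),
          β ^ (∑ i : Fin n, (α i : ℕ))
            * (∏ i : Fin n, (Nat.choose i.val (α i) : K))
            * schurComp8 x (fun i => lam i + (α i : ℕ)) := by
  classical
  have key : Matrix.det (Matrix.of fun i j : Fin n =>
        x j ^ (lam i + (n - 1 - i.val)) * (1 + β * x j) ^ i.val)
      = ∑ α : (i : Fin n) → Fin (i.val + 1),
          (∏ i : Fin n, ((Nat.choose i.val (α i) : K) * β ^ (α i : ℕ)))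
            * Matrix.det (Matrix.of fun i j : Fin n =>
                x j ^ (lam i + (α i : ℕ) + (n - 1 - i.val))) := by
    have hrow : (Matrix.of fun i j : Fin n =>
          x j ^ (lam i + (n - 1 - i.val)) * (1 + β * x j) ^ i.val)
        = fun i : Fin n => ∑ k : Fin (i.val + 1),
            ((Nat.choose i.val (k : ℕ) : K) * β ^ (k : ℕ)) •
              (fun j : Fin n => x j ^ (lam i + (k : ℕ) + (n - 1 - i.val))) := by
      funext i j
      simp only [Matrix.of_apply, Finset.sum_apply, Pi.smul_apply, smul_eq_mul]
      rw [add_comm (1 : K) (β * x j), add_pow]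
      rw [Finset.mul_sum, ← Fin.sum_univ_eq_sum_range
        (fun k => x j ^ (lam i + (n - 1 - i.val))
          * ((β * x j) ^ k * 1 ^ (i.val - k) * (i.val.choose k : K)))]
      refine Finset.sum_congr rfl fun k _ => ?_
      rw [show lam i + (k : ℕ) + (n - 1 - i.val)
          = (lam i + (n - 1 - i.val)) + (k : ℕ) from by omega,
        pow_add, mul_pow]
      ring
    have hdet : ∀ M : Matrix (Fin n) (Fin n) K,
        M.det = Matrix.detRowAlternating M := fun _ => rfl
    rw [hdet, hrow, ← AlternatingMap.coe_multilinearMap,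
      (Matrix.detRowAlternating (R := K) (n := Fin n)).toMultilinearMap.map_sum]
    refine Finset.sum_congr rfl fun α _ => ?_
    rw [MultilinearMap.map_smul_univ]
    simp only [smul_eq_mul]
    rw [hdet]
    rfl
  unfold grothDet8 schurComp8
  rw [key, Finset.sum_div]
  refine Finset.sum_congr rfl fun α _ => ?_
  rw [Finset.prod_mul_distrib, Finset.prod_pow_eq_pow_sum]
  rw [mul_div_assoc]
  ring
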